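/- For all reals a₁, b₁, a₂, b₂ and all integers x, z, the series ∑_{y∈ℤ} T_{a₁,b₁}(x,y) · T_{a₂,b₂}(y,z) converges absolutely, and its sum equals T_{a₁+a₂, b₁+b₂}(x,z). -/

import Mathlib

open Complex MeasureTheory
open scoped Real

/-- `T_{a,b}(x,y) = (1/(2πi)) ∮_{|w|=r} w^{x−y−1} e^{a/w + bw} dw`, the free
one-step transition operator of PushASEP. -/
noncomputable def T (a b : ℝ) (x y : ℤ) (r : ℝ) : ℂ :=
  (2 * (Real.pi : ℂ) * Complex.I)⁻¹ *
    ∮ w in C(0, r), w ^ (x - y - 1) * Complex.exp ((a : ℂ) / w + (b : ℂ) * w)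


/-!
On a circle `|w| = r` the integrand `w ^ s * exp (a / w + b * w)` is the absolutely convergent
double series `∑ (a ^ i / i!) (b ^ j / j!) w ^ (s + j - i)`, so integrating term by term shows that
`T a b x y r` is the Laurent coefficient `∑_{j - i = y - x} a ^ i b ^ j / (i! j!)`, independently
of `r`. The semigroup identity is then an identity between absolutely convergent series: the
fourfold series of products of coefficients of `exp (a₁ / w + b₁ w)` and `exp (a₂ / w + b₂ w)`
contributing to `w ^ (z - x)` can be summed first over the intermediate exponent `y`, giving
`∑_y T(x, y) T(y, z)`, or first over `(i₁ + i₂, j₁ + j₂)`, where the binomial theorem gives the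
coefficients of `exp ((a₁ + a₂) / w + (b₁ + b₂) w)`.
-/

open Finset Metric
open scoped Nat

theorem sum_antidiagonal_pow_div_factorial {K : Type*} [Field K] [CharZero K] (x y : K) (n : ℕ) :
    ∑ q ∈ antidiagonal n, x ^ q.1 / q.1 ! * (y ^ q.2 / q.2 !) = (x + y) ^ n / n ! := by
  rw [(Commute.all x y).add_pow', sum_div]
  refine sum_congr rfl fun q hq => ?_
  rw [← mem_antidiagonal.mp hq, nsmul_eq_mul, Nat.cast_add_choose]
  field_simp [Nat.factorial_ne_zero]

theorem summable_norm_tsum_fiberwise {β γ E : Type*} [NormedAddCommGroup E] [CompleteSpace E]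
    {f : β → E} (hf : Summable fun b => ‖f b‖) (g : β → γ) :
    Summable fun c => ‖∑' b : g ⁻¹' {c}, f b‖ :=
  (hf.hasSum.tsum_fiberwise g).summable.of_nonneg_of_le (fun _ => norm_nonneg _)
    fun _ => norm_tsum_le_tsum_norm (hf.subtype _)

theorem hasSum_circleIntegral_of_norm_le {ι : Type*} [Countable ι] {F : ι → ℂ → ℂ} {f : ℂ → ℂ}
    {c : ℂ} {R : ℝ} (M : ι → ℝ) (hF : ∀ i, ContinuousOn (F i) (sphere c |R|))
    (hFM : ∀ i, ∀ w ∈ sphere c |R|, ‖F i w‖ ≤ M i) (hM : Summable M)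
    (hf : ∀ w ∈ sphere c |R|, HasSum (fun i => F i w) (f w)) :
    HasSum (fun i => ∮ w in C(c, R), F i w) (∮ w in C(c, R), f w) := by
  refine intervalIntegral.hasSum_integral_of_dominated_convergence (fun i _ => |R| * M i)
    (fun i => ?_) (fun i => ?_) (.of_forall fun _ _ => hM.mul_left |R|) intervalIntegrable_const
    (.of_forall fun θ _ => (hf _ (circleMap_mem_sphere' c R θ)).const_smul _)
  · simp only [deriv_circleMap]
    exact ((continuous_circleMap 0 R).mul continuous_const).smul
      ((hF i).comp_continuous (continuous_circleMap c R) (circleMap_mem_sphere' c R))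
      |>.aestronglyMeasurable
  · refine .of_forall fun θ _ => ?_
    rw [norm_smul, deriv_circleMap, norm_mul, norm_circleMap_zero, Complex.norm_I, mul_one]
    exact mul_le_mul_of_nonneg_left (hFM i _ (circleMap_mem_sphere' c R θ)) (abs_nonneg R)

theorem circleIntegral_zpow {R : ℝ} (hR : 0 < R) (n : ℤ) :
    (∮ w in C(0, R), w ^ n) = if n = -1 then 2 * π * Complex.I else 0 := by
  split_ifs with hn
  · simpa [hn, zpow_neg_one] using
      circleIntegral.integral_sub_inv_of_mem_ball (mem_ball_self (x := (0 : ℂ)) hR)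
  · simpa using circleIntegral.integral_sub_zpow_of_ne hn 0 0 R

namespace PushASEP

/-- `expCoeff a b (i, j) * w ^ deg (i, j)` is the `(i, j)` term of the product of the exponential
series of `a / w` and `b * w`. -/
noncomputable def expCoeff (a b : ℂ) (p : ℕ × ℕ) : ℂ :=
  a ^ p.1 / (p.1 ! : ℂ) * (b ^ p.2 / (p.2 ! : ℂ))

def deg (p : ℕ × ℕ) : ℤ := p.2 - p.1

/-- The coefficient of `w ^ n` in the Laurent expansion of `exp (a / w + b * w)`. -/
noncomputable def laurentCoeff (a b : ℂ) (n : ℤ) : ℂ :=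
  ∑' p, (deg ⁻¹' {n}).indicator (expCoeff a b) p

theorem deg_add (p q : ℕ × ℕ) : deg (p + q) = deg p + deg q := by
  simp only [deg, Prod.fst_add, Prod.snd_add, Nat.cast_add]
  ring

theorem norm_expCoeff (a b : ℂ) (p : ℕ × ℕ) :
    ‖expCoeff a b p‖ = ‖a‖ ^ p.1 / p.1 ! * (‖b‖ ^ p.2 / p.2 !) := by
  simp [expCoeff]

theorem summable_norm_expCoeff (a b : ℂ) : Summable fun p => ‖expCoeff a b p‖ :=
  Summable.mul_norm (f := fun n => a ^ n / (n ! : ℂ)) (g := fun n => b ^ n / (n ! : ℂ))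
    (NormedSpace.norm_expSeries_div_summable a) (NormedSpace.norm_expSeries_div_summable b)

theorem summable_norm_indicator_expCoeff (a b : ℂ) (s : Set (ℕ × ℕ)) :
    Summable fun p => ‖s.indicator (expCoeff a b) p‖ :=
  (summable_norm_expCoeff a b).of_nonneg_of_le (fun _ => norm_nonneg _)
    fun _ => norm_indicator_le_norm_self _ _

theorem hasSum_expCoeff (a b : ℂ) : HasSum (expCoeff a b) (Complex.exp (a + b)) := by
  rw [Complex.exp_add, Complex.exp_eq_exp_ℂ]
  exact HasSum.mul (f := fun n => a ^ n / (n ! : ℂ)) (g := fun n => b ^ n / (n ! : ℂ))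
    (NormedSpace.expSeries_div_hasSum_exp a) (NormedSpace.expSeries_div_hasSum_exp b)
    (summable_norm_expCoeff a b).of_norm

theorem expCoeff_mul_zpow_deg (a b : ℂ) {w : ℂ} (hw : w ≠ 0) (p : ℕ × ℕ) :
    expCoeff a b p * w ^ deg p = expCoeff (a / w) (b * w) p := by
  rw [expCoeff, expCoeff, deg, zpow_sub₀ hw, zpow_natCast, zpow_natCast, div_pow, mul_pow]
  field_simp

theorem hasSum_expCoeff_mul_zpow (a b : ℂ) {w : ℂ} (hw : w ≠ 0) (s : ℤ) :
    HasSum (fun p => expCoeff a b p * w ^ (s + deg p)) (w ^ s * Complex.exp (a / w + b * w)) := by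
  simpa only [zpow_add₀ hw, mul_left_comm, expCoeff_mul_zpow_deg a b hw]
    using (hasSum_expCoeff (a / w) (b * w)).mul_left (w ^ s)

theorem norm_expCoeff_mul_zpow {r : ℝ} (hr : 0 < r) (a b : ℂ) {w : ℂ} (hw : ‖w‖ = r) (s : ℤ)
    (p : ℕ × ℕ) :
    ‖expCoeff a b p * w ^ (s + deg p)‖ = r ^ s * ‖expCoeff (a / r) (b * r) p‖ := by
  have hw₀ : w ≠ 0 := norm_pos_iff.mp (hw ▸ hr)
  rw [zpow_add₀ hw₀, mul_left_comm, expCoeff_mul_zpow_deg _ _ hw₀, norm_mul, norm_zpow, hw,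
    norm_expCoeff, norm_expCoeff]
  simp [hw, abs_of_pos hr]

theorem T_eq_laurentCoeff (a b : ℝ) (x y : ℤ) {r : ℝ} (hr : 0 < r) :
    T a b x y r = laurentCoeff a b (y - x) := by
  have hnorm : ∀ w ∈ sphere (0 : ℂ) |r|, ‖w‖ = r := by simp [abs_of_pos hr]
  have hne : ∀ w ∈ sphere (0 : ℂ) |r|, w ≠ 0 := fun w hw =>
    norm_pos_iff.mp ((hnorm w hw).symm ▸ hr)
  have hsum := hasSum_circleIntegral_of_norm_le (R := r)
    (F := fun p w => expCoeff a b p * w ^ (x - y - 1 + deg p))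
    (fun p => r ^ (x - y - 1) * ‖expCoeff (a / r) (b * r) p‖)
    (fun p => continuousOn_const.mul (continuousOn_id.zpow₀ _ fun w hw => .inl (hne w hw)))
    (fun p w hw => (norm_expCoeff_mul_zpow hr _ _ (hnorm w hw) _ p).le)
    ((summable_norm_expCoeff _ _).mul_left _)
    (fun w hw => hasSum_expCoeff_mul_zpow _ _ (hne w hw) _)
  have hterm : ∀ p, (∮ w in C(0, r), expCoeff a b p * w ^ (x - y - 1 + deg p))
      = 2 * π * Complex.I * (deg ⁻¹' {y - x}).indicator (expCoeff a b) p := by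
    intro p
    rw [circleIntegral.integral_const_mul, circleIntegral_zpow hr]
    by_cases hp : deg p = y - x
    · rw [if_pos (by omega), Set.indicator_of_mem (show p ∈ deg ⁻¹' {y - x} from hp)]
      ring
    · rw [if_neg (by omega), Set.indicator_of_notMem (show p ∉ deg ⁻¹' {y - x} from hp)]
      ring
  simp only [hterm] at hsum
  rw [T, ← hsum.tsum_eq, tsum_mul_left, laurentCoeff, ← mul_assoc,
    inv_mul_cancel₀ (by simp [Real.pi_ne_zero]), one_mul]

theorem sum_antidiagonal_expCoeff (a₁ b₁ a₂ b₂ : ℂ) (p : ℕ × ℕ) :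
    ∑ v ∈ antidiagonal p.1 ×ˢ antidiagonal p.2,
        expCoeff a₁ b₁ (v.1.1, v.2.1) * expCoeff a₂ b₂ (v.1.2, v.2.2)
      = expCoeff (a₁ + a₂) (b₁ + b₂) p := by
  rw [expCoeff, ← sum_antidiagonal_pow_div_factorial, ← sum_antidiagonal_pow_div_factorial,
    sum_mul_sum, sum_product]
  refine sum_congr rfl fun _ _ => sum_congr rfl fun _ _ => ?_
  simp only [expCoeff]
  ring

section Convolution

variable (a₁ b₁ a₂ b₂ : ℂ) (x z : ℤ)

noncomputable def convTerm : (ℕ × ℕ) × (ℕ × ℕ) → ℂ :=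
  {u | deg u.1 + deg u.2 = z - x}.indicator fun u => expCoeff a₁ b₁ u.1 * expCoeff a₂ b₂ u.2

theorem summable_norm_convTerm : Summable fun u => ‖convTerm a₁ b₁ a₂ b₂ x z u‖ :=
  ((summable_norm_expCoeff a₁ b₁).mul_norm (summable_norm_expCoeff a₂ b₂)).of_nonneg_of_le
    (fun _ => norm_nonneg _) fun _ => norm_indicator_le_norm_self _ _

theorem tsum_fiber_deg_fst_convTerm (y : ℤ) :
    ∑' u : (fun u : (ℕ × ℕ) × (ℕ × ℕ) => x + deg u.1) ⁻¹' {y}, convTerm a₁ b₁ a₂ b₂ x z u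
      = laurentCoeff a₁ b₁ (y - x) * laurentCoeff a₂ b₂ (z - y) := by
  rw [_root_.tsum_subtype, laurentCoeff, laurentCoeff, tsum_mul_tsum_of_summable_norm
    (summable_norm_indicator_expCoeff _ _ _) (summable_norm_indicator_expCoeff _ _ _)]
  refine tsum_congr fun u => ?_
  simp only [convTerm, Set.indicator, Set.mem_preimage, Set.mem_singleton_iff, Set.mem_ofPred]
  split_ifs <;> first | rfl | (exfalso; omega) | simp

theorem tsum_fiber_add_convTerm (p : ℕ × ℕ) :
    ∑' u : (fun u : (ℕ × ℕ) × (ℕ × ℕ) => u.1 + u.2) ⁻¹' {p}, convTerm a₁ b₁ a₂ b₂ x z u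
      = (deg ⁻¹' {z - x}).indicator (expCoeff (a₁ + a₂) (b₁ + b₂)) p := by
  set e := (Equiv.prodProdProdComm ℕ ℕ ℕ ℕ).toEmbedding
  set S : Set ((ℕ × ℕ) × (ℕ × ℕ)) := {u | deg u.1 + deg u.2 = z - x}
  have hfiber : (fun u : (ℕ × ℕ) × (ℕ × ℕ) => u.1 + u.2) ⁻¹' {p}
      = ((antidiagonal p.1 ×ˢ antidiagonal p.2).map e : Set _) := by
    ext ⟨⟨i₁, j₁⟩, ⟨i₂, j₂⟩⟩
    simp [e, Prod.ext_iff]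
  have hdeg : ∀ v ∈ antidiagonal p.1 ×ˢ antidiagonal p.2, deg (e v).1 + deg (e v).2 = deg p := by
    intro v hv
    rw [← deg_add]
    congr 1
    simp_all [e]
  rw [hfiber, Finset.tsum_subtype', sum_map]
  by_cases hp : deg p = z - x
  · rw [Set.indicator_of_mem (show p ∈ deg ⁻¹' {z - x} from hp), ← sum_antidiagonal_expCoeff]
    exact sum_congr rfl fun v hv => Set.indicator_of_mem (s := S) ((hdeg v hv).trans hp) _
  · rw [Set.indicator_of_notMem (show p ∉ deg ⁻¹' {z - x} from hp)]
    exact sum_eq_zero fun v hv => Set.indicator_of_notMem (s := S) ((hdeg v hv).trans_ne hp) _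

theorem hasSum_laurentCoeff_mul_laurentCoeff :
    HasSum (fun y => laurentCoeff a₁ b₁ (y - x) * laurentCoeff a₂ b₂ (z - y))
      (laurentCoeff (a₁ + a₂) (b₁ + b₂) (z - x)) := by
  have hsum := (summable_norm_convTerm a₁ b₁ a₂ b₂ x z).of_norm.hasSum
  have hdeg := hsum.tsum_fiberwise fun u => x + deg u.1
  have hadd := hsum.tsum_fiberwise fun u => u.1 + u.2
  simp only [tsum_fiber_deg_fst_convTerm, tsum_fiber_add_convTerm] at hdeg hadd
  rwa [laurentCoeff, hadd.tsum_eq]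

theorem summable_norm_laurentCoeff_mul_laurentCoeff :
    Summable fun y => ‖laurentCoeff a₁ b₁ (y - x) * laurentCoeff a₂ b₂ (z - y)‖ := by
  simpa only [tsum_fiber_deg_fst_convTerm] using
    summable_norm_tsum_fiberwise (summable_norm_convTerm a₁ b₁ a₂ b₂ x z) fun u => x + deg u.1

end Convolution

end PushASEP

/-- semigroup property
`∑_{y∈ℤ} T_{a₁,b₁}(x,y) T_{a₂,b₂}(y,z) = T_{a₁+a₂,b₁+b₂}(x,z)`,
the series converging absolutely. -/
theorem stmt14 (a₁ b₁ a₂ b₂ : ℝ) (x z : ℤ)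
    (r₁ r₂ r₃ : ℝ) (hr₁ : 0 < r₁) (hr₂ : 0 < r₂) (hr₃ : 0 < r₃) :
    Summable (fun y : ℤ => ‖T a₁ b₁ x y r₁ * T a₂ b₂ y z r₂‖) ∧
    ∑' y : ℤ, T a₁ b₁ x y r₁ * T a₂ b₂ y z r₂
      = T (a₁ + a₂) (b₁ + b₂) x z r₃ := by
  simp only [PushASEP.T_eq_laurentCoeff _ _ _ _ hr₁, PushASEP.T_eq_laurentCoeff _ _ _ _ hr₂,
    PushASEP.T_eq_laurentCoeff _ _ _ _ hr₃]
  push_cast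
  exact ⟨PushASEP.summable_norm_laurentCoeff_mul_laurentCoeff _ _ _ _ x z,
    (PushASEP.hasSum_laurentCoeff_mul_laurentCoeff _ _ _ _ x z).tsum_eq⟩
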